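/- For any n×n complex matrix S = [s_{kj}], the numerical radius of S is at most the numerical radius of the entrywise absolute value matrix: w(S) ≤ w([|s_{kj}|]), and moreover w([|s_{kj}|]) equals (1/2)·r([|s_{kj}|] + [|s_{kj}|]ᵀ), the spectral radius of the symmetrization. -/

import Mathlib

open scoped Matrix

noncomputable def numRad {H : Type*} [NormedAddCommGroup H] [InnerProductSpace ℂ H]
    (T : H →L[ℂ] H) : ℝ :=
  sSup {r : ℝ | ∃ x : H, ‖x‖ = 1 ∧ r = ‖(inner ℂ (T x) x : ℂ)‖}

/-- Numerical radius of a square complex matrix, viewed as an operator on Euclidean space. -/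
noncomputable def numRadM {n : ℕ} (M : Matrix (Fin n) (Fin n) ℂ) : ℝ :=
  numRad (Matrix.toEuclideanCLM (𝕜 := ℂ) M)

/-- Spectral radius of a square complex matrix. -/
noncomputable def specRadM {n : ℕ} (M : Matrix (Fin n) (Fin n) ℂ) : ℝ :=
  sSup {r : ℝ | ∃ μ ∈ spectrum ℂ M, r = ‖μ‖}

/-!
With `|x|` the vector of moduli of `x` and `|S|` the matrix of moduli of `S`, the triangle
inequality gives `|⟪S x, x⟫| ≤ ⟪|S| |x|, |x|⟫`. The right-hand side is real, so it equals
`⟪ℜ|S| |x|, |x|⟫ ≤ ‖ℜ|S|‖`, where `ℜ T = (T + T⋆)/2`; hence `w(S) ≤ w(|S|) ≤ ‖ℜ|S|‖`.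
Conversely `‖ℜ T‖ ≤ w(T)` for every `T`: the norm of the self-adjoint `ℜ T` is the supremum of
its Rayleigh quotients, which are those of `T`. Finally `2 ℜ|S| = |S| + |S|ᵀ` is Hermitian, so its
norm is its spectral radius.
-/

open scoped ComplexStarModule InnerProductSpace ComplexConjugate ENNReal

section NumericalRadius

variable {H : Type*} [NormedAddCommGroup H] [InnerProductSpace ℂ H]

lemma norm_inner_apply_self_le_numRad (T : H →L[ℂ] H) {x : H} (hx : ‖x‖ = 1) :
    ‖⟪T x, x⟫_ℂ‖ ≤ numRad T := by
  refine le_csSup ⟨‖T‖, ?_⟩ ⟨x, hx, rfl⟩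
  rintro _ ⟨y, hy, rfl⟩
  simpa [hy] using (norm_inner_le_norm (T y) y).trans (by simpa [hy] using T.le_opNorm y)

lemma numRad_nonneg (T : H →L[ℂ] H) : 0 ≤ numRad T :=
  Real.sSup_nonneg fun _ ⟨_, _, hr⟩ => hr ▸ norm_nonneg _

lemma numRad_le {T : H →L[ℂ] H} {c : ℝ} (hc : 0 ≤ c)
    (h : ∀ x, ‖x‖ = 1 → ‖⟪T x, x⟫_ℂ‖ ≤ c) : numRad T ≤ c :=
  Real.sSup_le (fun _ ⟨x, hx, hr⟩ => hr ▸ h x hx) hc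

lemma abs_rayleighQuotient_le_numRad (T : H →L[ℂ] H) (x : H) :
    |T.rayleighQuotient x| ≤ numRad T := by
  rcases eq_or_ne x 0 with rfl | hx
  · simpa using numRad_nonneg T
  have hu : ‖((‖x‖⁻¹ : ℝ) : ℂ) • x‖ = 1 := by
    rw [norm_smul, Complex.norm_real, norm_inv, norm_norm, inv_mul_cancel₀ (norm_ne_zero_iff.2 hx)]
  rw [← T.rayleigh_smul x (c := ((‖x‖⁻¹ : ℝ) : ℂ)) (by simpa using hx)]
  simp only [ContinuousLinearMap.rayleighQuotient, ContinuousLinearMap.reApplyInnerSelf_apply, hu,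
    one_pow, div_one]
  exact (RCLike.abs_re_le_norm _).trans (norm_inner_apply_self_le_numRad T hu)

variable [CompleteSpace H]

lemma re_inner_realPart_apply_self (T : H →L[ℂ] H) (x : H) :
    (⟪(ℜ T : H →L[ℂ] H) x, x⟫_ℂ).re = (⟪T x, x⟫_ℂ).re := by
  rw [realPart_apply_coe, ContinuousLinearMap.star_eq_adjoint, smul_apply, add_apply,
    inner_smul_left_eq_smul, inner_add_left, ContinuousLinearMap.adjoint_inner_left,
    ← inner_conj_symm x (T x)]
  simp only [Complex.real_smul, Complex.re_ofReal_mul, Complex.add_re, Complex.conj_re]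
  ring

lemma norm_realPart_le_numRad (T : H →L[ℂ] H) : ‖(ℜ T : H →L[ℂ] H)‖ ≤ numRad T := by
  rw [ContinuousLinearMap.norm_eq_iSup_rayleighQuotient _ (ℜ T).prop.isSymmetric]
  refine ciSup_le fun x => ?_
  have h : (ℜ T : H →L[ℂ] H).rayleighQuotient x = T.rayleighQuotient x :=
    congrArg (· / ‖x‖ ^ 2) (re_inner_realPart_apply_self T x)
  exact h ▸ abs_rayleighQuotient_le_numRad T x

lemma re_inner_apply_self_le_norm_realPart (T : H →L[ℂ] H) {x : H} (hx : ‖x‖ = 1) :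
    (⟪T x, x⟫_ℂ).re ≤ ‖(ℜ T : H →L[ℂ] H)‖ := by
  calc (⟪T x, x⟫_ℂ).re = (⟪(ℜ T : H →L[ℂ] H) x, x⟫_ℂ).re :=
        (re_inner_realPart_apply_self T x).symm
    _ ≤ ‖(ℜ T : H →L[ℂ] H) x‖ := by
        simpa [hx] using (Complex.re_le_norm _).trans (norm_inner_le_norm _ x)
    _ ≤ ‖(ℜ T : H →L[ℂ] H)‖ := by simpa [hx] using (ℜ T : H →L[ℂ] H).le_opNorm x

end NumericalRadius

lemma sSup_norm_spectrum_eq_toReal_spectralRadius {A : Type*} [NormedRing A] [NormedAlgebra ℂ A]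
    [CompleteSpace A] (a : A) :
    sSup {r : ℝ | ∃ μ ∈ spectrum ℂ a, r = ‖μ‖} = (spectralRadius ℂ a).toReal := by
  rcases (spectrum ℂ a).eq_empty_or_nonempty with h | h
  · simp [h, spectralRadius]
  obtain ⟨μ, hμ, hμr⟩ := spectrum.exists_nnnorm_eq_spectralRadius_of_nonempty h
  rw [← hμr]
  refine IsGreatest.csSup_eq ⟨⟨μ, hμ, rfl⟩, ?_⟩
  rintro _ ⟨ν, hν, rfl⟩
  have : (‖ν‖₊ : ℝ≥0∞) ≤ ‖μ‖₊ := hμr ▸ le_iSup₂ (α := ℝ≥0∞) ν hν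
  exact_mod_cast this

open scoped Matrix.Norms.L2Operator in
lemma specRadM_eq_norm_toEuclideanCLM {n : ℕ} {B : Matrix (Fin n) (Fin n) ℂ} (hB : B.IsHermitian) :
    specRadM B = ‖Matrix.toEuclideanCLM (𝕜 := ℂ) B‖ := by
  rw [specRadM, sSup_norm_spectrum_eq_toReal_spectralRadius,
    hB.isSelfAdjoint.toReal_spectralRadius_complex_eq_norm, Matrix.cstar_norm_def]

section Matrix

variable {ι : Type*} [Fintype ι]

noncomputable def Matrix.absEntries {m n : Type*} (M : Matrix m n ℂ) : Matrix m n ℂ :=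
  Matrix.of fun k j => ((‖M k j‖ : ℝ) : ℂ)

noncomputable def EuclideanSpace.abs (x : EuclideanSpace ℂ ι) : EuclideanSpace ℂ ι :=
  WithLp.toLp 2 fun i => ((‖x i‖ : ℝ) : ℂ)

lemma EuclideanSpace.norm_abs (x : EuclideanSpace ℂ ι) : ‖x.abs‖ = ‖x‖ := by
  simp [EuclideanSpace.norm_eq, EuclideanSpace.abs]

lemma Matrix.absEntries_absEntries {m n : Type*} (M : Matrix m n ℂ) :
    M.absEntries.absEntries = M.absEntries := by
  ext k j
  simp [Matrix.absEntries]

lemma Matrix.conjTranspose_absEntries {m n : Type*} (M : Matrix m n ℂ) :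
    M.absEntriesᴴ = M.absEntriesᵀ := by
  ext k j
  simp [Matrix.absEntries]

variable [DecidableEq ι]

lemma Matrix.inner_toEuclideanCLM_apply_self (M : Matrix ι ι ℂ) (x : EuclideanSpace ℂ ι) :
    ⟪Matrix.toEuclideanCLM (𝕜 := ℂ) M x, x⟫_ℂ = ∑ k, ∑ j, conj (M k j * x j) * x k := by
  simp [PiLp.inner_apply, Matrix.mulVec, dotProduct, Finset.mul_sum, mul_comm]

lemma Matrix.norm_inner_toEuclideanCLM_apply_self_le (M : Matrix ι ι ℂ) (x : EuclideanSpace ℂ ι) :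
    ‖⟪Matrix.toEuclideanCLM (𝕜 := ℂ) M x, x⟫_ℂ‖ ≤
      (⟪Matrix.toEuclideanCLM (𝕜 := ℂ) M.absEntries x.abs, x.abs⟫_ℂ).re := by
  rw [Matrix.inner_toEuclideanCLM_apply_self, Matrix.inner_toEuclideanCLM_apply_self]
  calc _ ≤ ∑ k, ∑ j, ‖conj (M k j * x j) * x k‖ :=
        (norm_sum_le _ _).trans (Finset.sum_le_sum fun k _ => norm_sum_le _ _)
    _ = _ := by simp [Complex.re_sum, Matrix.absEntries, EuclideanSpace.abs, ← Complex.ofReal_mul]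

lemma Matrix.norm_realPart_toEuclideanCLM (M : Matrix ι ι ℂ) :
    ‖(ℜ (Matrix.toEuclideanCLM (𝕜 := ℂ) M) : EuclideanSpace ℂ ι →L[ℂ] EuclideanSpace ℂ ι)‖ =
      2⁻¹ * ‖Matrix.toEuclideanCLM (𝕜 := ℂ) (M + Mᴴ)‖ := by
  rw [realPart_apply_coe, ← map_star, ← map_add, norm_smul, Real.norm_of_nonneg (by norm_num)]
  rfl

lemma Matrix.numRad_toEuclideanCLM_le_absEntries (M : Matrix ι ι ℂ) :
    numRad (Matrix.toEuclideanCLM (𝕜 := ℂ) M) ≤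
      numRad (Matrix.toEuclideanCLM (𝕜 := ℂ) M.absEntries) :=
  numRad_le (numRad_nonneg _) fun x hx =>
    (M.norm_inner_toEuclideanCLM_apply_self_le x).trans <| (Complex.re_le_norm _).trans <|
      norm_inner_apply_self_le_numRad _ (x.norm_abs.trans hx)

lemma Matrix.numRad_toEuclideanCLM_absEntries (M : Matrix ι ι ℂ) :
    numRad (Matrix.toEuclideanCLM (𝕜 := ℂ) M.absEntries) =
      ‖(ℜ (Matrix.toEuclideanCLM (𝕜 := ℂ) M.absEntries) :
        EuclideanSpace ℂ ι →L[ℂ] EuclideanSpace ℂ ι)‖ := by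
  refine le_antisymm (numRad_le (norm_nonneg _) fun x hx => ?_) (norm_realPart_le_numRad _)
  have h := M.absEntries.norm_inner_toEuclideanCLM_apply_self_le x
  rw [Matrix.absEntries_absEntries] at h
  exact h.trans (re_inner_apply_self_le_norm_realPart _ (x.norm_abs.trans hx))

end Matrix

theorem numRad_le_numRad_abs_entries {n : ℕ} (S : Matrix (Fin n) (Fin n) ℂ) :
    numRadM S ≤ numRadM (Matrix.of fun k j => ((‖S k j‖ : ℝ) : ℂ)) ∧
    numRadM (Matrix.of fun k j => ((‖S k j‖ : ℝ) : ℂ)) =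
      (1 / 2 : ℝ) * specRadM ((Matrix.of fun k j => ((‖S k j‖ : ℝ) : ℂ)) +
        (Matrix.of fun k j => ((‖S k j‖ : ℝ) : ℂ))ᵀ) := by
  refine ⟨S.numRad_toEuclideanCLM_le_absEntries, ?_⟩
  calc numRadM S.absEntries
      = ‖(ℜ (Matrix.toEuclideanCLM (𝕜 := ℂ) S.absEntries) :
          EuclideanSpace ℂ (Fin n) →L[ℂ] EuclideanSpace ℂ (Fin n))‖ :=
        S.numRad_toEuclideanCLM_absEntries
    _ = 2⁻¹ * ‖Matrix.toEuclideanCLM (𝕜 := ℂ) (S.absEntries + S.absEntriesᴴ)‖ :=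
        S.absEntries.norm_realPart_toEuclideanCLM
    _ = (1 / 2 : ℝ) * specRadM (S.absEntries + S.absEntriesᵀ) := by
        rw [← S.conjTranspose_absEntries,
          specRadM_eq_norm_toEuclideanCLM (Matrix.isHermitian_add_transpose_self _), one_div]
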